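/- arXiv:2410.07179 — 2 statements merged into one kernel-verified Lean document; each statement's English description precedes it below -/
import Mathlib

section
/- For SL₂ over an algebraically closed field of characteristic p, with p-restricted dominant weights λ, μ ∈ {0,1,…,p-1} (identifying weights with ℕ), the tensor product L(λ) ⊗ L(μ) is multiplicity-free if and only if λ + μ ≤ p - 1. -/
/-- The Weyl character `χ(ν) = Σ_{i=0}^{ν} e^{ν-2i}` of highest weight `ν` for `SL₂`,
in the group ring `ℤ[ℤ]`.  For `p`-restricted `ν` (i.e. `ν < p`) this is the character
of the irreducible module `L(ν)`, since `Δ(ν)` is then irreducible. -/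
noncomputable def chi (nu : ℕ) : AddMonoidAlgebra ℤ ℤ :=
  ∑ i ∈ Finset.range (nu + 1), AddMonoidAlgebra.single ((nu : ℤ) - 2 * i) (1 : ℤ)

/-- The Frobenius twist on characters: scales all weights by `p`. -/
noncomputable def frobTwist (p : ℕ) (f : AddMonoidAlgebra ℤ ℤ) : AddMonoidAlgebra ℤ ℤ :=
  AddMonoidAlgebra.ofCoeff (Finsupp.mapDomain (fun n : ℤ => (p : ℤ) * n) f.coeff)

/-- The character of the irreducible `SL₂`-module `L(ν)` in characteristic `p`:
by Steinberg's tensor product theorem, if `ν = Σ p^i νᵢ` with `νᵢ` the base-`p`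
digits of `ν`, then `ch L(ν) = Π_i (χ(νᵢ))^{(p^i)}` where `(p^i)` denotes the
`i`-fold Frobenius twist. -/
noncomputable def chL (p : ℕ) (nu : ℕ) : AddMonoidAlgebra ℤ ℤ :=
  ((Nat.digits p nu).mapIdx fun i d => (frobTwist p)^[i] (chi d)).prod

/-!
For restricted `ν` the character of `L(ν)` is the Weyl character `χ(ν)`, and the Clebsch–Gordan
rule `χ(a) χ(b) = Σ_j χ(a + b - 2j)` (an identity in the domain `ℤ[ℤ]`, checked after multiplying
by the Weyl denominator `e¹ - e⁻¹`) already decomposes `L(a) ⊗ L(b)` into distinct restricted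
simples when `a + b < p`. Otherwise Steinberg's formula gives `χ(a + b) = ch L(a + b) + χ(w)`
with `w = 2p - 2 - (a + b)`, and `χ(w) = ch L(w)` is also a Clebsch–Gordan term, so `L(w)` occurs
twice. The characters `ch L(ν)` are unitriangular with respect to highest weights, hence linearly
independent, so multiplicities are well defined and no multiplicity-free decomposition exists.
-/

open AddMonoidAlgebra Finset

theorem LinearIndependent.sum_ne_two_nsmul_add {ι M : Type*} [AddCommMonoid M] {v : ι → M}
    (hv : LinearIndependent ℕ v) (S : Finset ι) (i : ι) {y : M}
    (hy : y ∈ Submodule.span ℕ (Set.range v)) : ∑ j ∈ S, v j ≠ 2 • v i + y := by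
  classical
  obtain ⟨c, rfl⟩ := Finsupp.mem_span_range_iff_exists_finsupp.mp hy
  intro h
  have hc : ∑ j ∈ S, Finsupp.single j 1 = Finsupp.single i 2 + c := hv <| by
    simp [Finsupp.linearCombination_apply, map_sum, h, Finsupp.sum_add_index', add_smul]
  have hi := congr_arg (· i) hc
  simp only [Finsupp.finsetSum_apply, Finsupp.add_apply, Finsupp.single_apply, sum_ite_eq',
    if_true] at hi
  split_ifs at hi <;> omega

def HasHighestWeight {R : Type*} [Semiring R] (f : AddMonoidAlgebra R ℤ) (n : ℤ) : Prop :=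
  (∀ w ∈ f.coeff.support, w ≤ n) ∧ f.coeff n = 1

namespace HasHighestWeight

variable {R : Type*} [Semiring R] {f g : AddMonoidAlgebra R ℤ} {a b : ℤ}

lemma coeff_eq_zero (hf : HasHighestWeight f a) {w : ℤ} (hw : a < w) : f.coeff w = 0 :=
  Finsupp.notMem_support_iff.mp fun hmem => (hf.1 w hmem).not_gt hw

lemma one : HasHighestWeight (1 : AddMonoidAlgebra R ℤ) 0 := by
  classical
  rw [HasHighestWeight, one_def, coeff_single]
  refine ⟨fun w hw => ?_, Finsupp.single_eq_same⟩
  exact (Finset.mem_singleton.mp (Finsupp.support_single_subset hw)).le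

lemma mul (hf : HasHighestWeight f a) (hg : HasHighestWeight g b) :
    HasHighestWeight (f * g) (a + b) := by
  classical
  refine ⟨fun w hw => ?_, ?_⟩
  · obtain ⟨x, hx, y, hy, rfl⟩ := Finset.mem_add.mp (support_coeff_mul_subset f g hw)
    exact add_le_add (hf.1 x hx) (hg.1 y hy)
  · rw [coeff_mul_add_of_uniqueAdd, hf.2, hg.2, one_mul]
    intro x y hx hy hxy
    have hxa := hf.1 x hx
    have hyb := hg.1 y hy
    omega

lemma list_prod {fs : List (AddMonoidAlgebra R ℤ)} {ns : List ℤ}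
    (h : List.Forall₂ HasHighestWeight fs ns) : HasHighestWeight fs.prod ns.sum := by
  induction h with
  | nil => exact one
  | cons hf _ ih => simpa using hf.mul ih

end HasHighestWeight

theorem linearIndependent_of_hasHighestWeight {R : Type*} [Ring R] {v : ℕ → AddMonoidAlgebra R ℤ}
    (hv : ∀ ν, HasHighestWeight (v ν) ν) : LinearIndependent R v := by
  rw [linearIndependent_iff]
  intro l hl
  by_contra hne
  set N := l.support.max' (Finsupp.support_nonempty_iff.mpr hne)
  have hN : N ∈ l.support := max'_mem _ _
  have hcoeff : (Finsupp.linearCombination R v l).coeff N = l N := by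
    rw [Finsupp.linearCombination_apply, Finsupp.sum, coeff_sum, Finsupp.finsetSum_apply,
      sum_eq_single_of_mem N hN, coeff_smul_apply, (hv N).2, smul_eq_mul, mul_one]
    intro ν hν hνN
    rw [coeff_smul_apply, (hv ν).coeff_eq_zero (mod_cast (le_max' _ ν hν).lt_of_ne hνN), smul_zero]
  rw [hl] at hcoeff
  exact Finsupp.mem_support_iff.mp hN hcoeff.symm

noncomputable def weylDenom : AddMonoidAlgebra ℤ ℤ := single 1 1 - single (-1) 1

lemma weylDenom_ne_zero : weylDenom ≠ 0 := by
  intro h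
  simpa [weylDenom, Finsupp.single_apply] using congr_arg (fun f => f.coeff 1) h

lemma weylDenom_mul_chi (n : ℕ) :
    weylDenom * chi n = single ((n : ℤ) + 1) 1 - single (-((n : ℤ) + 1)) 1 := by
  have step (i : ℕ) : weylDenom * single ((n : ℤ) - 2 * i) 1
      = single ((n : ℤ) + 1 - 2 * i) 1 - single ((n : ℤ) + 1 - 2 * (i + 1 : ℕ)) 1 := by
    rw [weylDenom, sub_mul, single_mul_single, single_mul_single]
    congr 2 <;> push_cast <;> ring
  rw [chi, mul_sum]
  simp only [step]
  rw [sum_range_sub' (fun i : ℕ => single ((n : ℤ) + 1 - 2 * i) (1 : ℤ))]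
  congr 2
  push_cast
  ring

lemma chi_mul_chi_of_le {a b : ℕ} (hba : b ≤ a) :
    chi a * chi b = ∑ j ∈ range (b + 1), chi (a + b - 2 * j) := by
  apply mul_left_cancel₀ weylDenom_ne_zero
  have hrhs (j : ℕ) (hj : j ∈ range (b + 1)) : weylDenom * chi (a + b - 2 * j)
      = single ((a : ℤ) + 1 + ((b : ℤ) - 2 * j)) 1
        - single (-((a : ℤ) + 1) + ((b : ℤ) - 2 * (b - j : ℕ))) 1 := by
    have hjb : j ≤ b := Nat.lt_succ_iff.mp (mem_range.mp hj)
    rw [weylDenom_mul_chi]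
    congr 2 <;> push_cast [hjb, show 2 * j ≤ a + b by omega] <;> ring
  rw [mul_sum, sum_congr rfl hrhs, sum_sub_distrib, ← mul_assoc, weylDenom_mul_chi, sub_mul, chi,
    mul_sum, mul_sum]
  simp only [single_mul_single, one_mul]
  congr 1
  -- the negative terms match after reversing the order of summation, `j ↦ b - j`
  rw [← sum_range_reflect _ (b + 1)]
  simp only [Nat.add_sub_cancel]

/-- The Clebsch–Gordan weights `a + b, a + b - 2, …, |a - b|`. -/
def cgWeights (a b : ℕ) : Finset ℕ :=
  (range (min a b + 1)).image fun j => a + b - 2 * j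

lemma mem_cgWeights {a b ν : ℕ} : ν ∈ cgWeights a b ↔ ∃ j ≤ min a b, a + b - 2 * j = ν := by
  simp [cgWeights]

lemma chi_mul_chi (a b : ℕ) : chi a * chi b = ∑ ν ∈ cgWeights a b, chi ν := by
  rw [cgWeights, sum_image fun i hi j hj hij => by simp only [coe_range, Set.mem_Iio] at hi hj; omega]
  rcases le_total b a with h | h
  · rw [min_eq_right h, chi_mul_chi_of_le h]
  · rw [min_eq_left h, mul_comm, chi_mul_chi_of_le h, add_comm a b]

lemma hasHighestWeight_chi (n : ℕ) : HasHighestWeight (chi n) n := by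
  classical
  refine ⟨fun w hw => ?_, ?_⟩
  · rw [chi, coeff_sum] at hw
    obtain ⟨i, -, hi⟩ := mem_biUnion.mp (Finsupp.support_finsetSum hw)
    rw [coeff_single, Finsupp.mem_support_iff, Finsupp.single_apply] at hi
    split_ifs at hi with h
    · omega
    · exact absurd rfl hi
  · rw [chi, coeff_sum, Finsupp.finsetSum_apply, sum_eq_single_of_mem 0 (by simp)]
    · simp
    · intro i _ hi
      rw [coeff_single, Finsupp.single_apply, if_neg (by omega)]

lemma HasHighestWeight.frobTwist {p : ℕ} (hp : p ≠ 0) {f : AddMonoidAlgebra ℤ ℤ} {n : ℤ}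
    (hf : HasHighestWeight f n) : HasHighestWeight (frobTwist p f) (p * n) := by
  classical
  have hinj : Function.Injective fun x : ℤ => (p : ℤ) * x := mul_right_injective₀ (by simpa)
  refine ⟨fun w hw => ?_, ?_⟩
  · obtain ⟨x, hx, rfl⟩ := Finset.mem_image.mp (Finsupp.mapDomain_support hw)
    exact mul_le_mul_of_nonneg_left (hf.1 x hx) (by positivity)
  · rw [_root_.frobTwist, coeff_ofCoeff, Finsupp.mapDomain_apply hinj, hf.2]

lemma hasHighestWeight_iterate_frobTwist {p : ℕ} (hp : p ≠ 0) (i : ℕ) {f : AddMonoidAlgebra ℤ ℤ}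
    {n : ℤ} (hf : HasHighestWeight f n) : HasHighestWeight ((frobTwist p)^[i] f) (p ^ i * n) := by
  induction i generalizing f n with
  | zero => simpa using hf
  | succ i ih => simpa [pow_succ, mul_assoc] using ih (hf.frobTwist hp)

lemma hasHighestWeight_chL {p : ℕ} (hp : p ≠ 0) (ν : ℕ) : HasHighestWeight (chL p ν) ν := by
  have hdigits : List.Forall₂ HasHighestWeight
      ((Nat.digits p ν).mapIdx fun i d => (frobTwist p)^[i] (chi d))
      (((Nat.digits p ν).mapIdx fun i d => d * p ^ i).map ((↑) : ℕ → ℤ)) := by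
    refine List.forall₂_iff_get.mpr ⟨by simp, fun i _ _ => ?_⟩
    simp only [List.get_eq_getElem, List.getElem_map, List.getElem_mapIdx]
    push_cast
    rw [mul_comm]
    exact hasHighestWeight_iterate_frobTwist hp i (hasHighestWeight_chi _)
  have := HasHighestWeight.list_prod hdigits
  rwa [← Nat.cast_list_sum, ← Nat.ofDigits_eq_sum_mapIdx, Nat.ofDigits_digits] at this

theorem linearIndependent_chL {p : ℕ} (hp : p ≠ 0) : LinearIndependent ℤ (chL p) :=
  linearIndependent_of_hasHighestWeight (hasHighestWeight_chL hp)

lemma chL_of_lt {p ν : ℕ} (h : ν < p) : chL p ν = chi ν := by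
  rcases eq_or_ne ν 0 with rfl | hν
  · rw [chL, Nat.digits_zero, List.mapIdx_nil, List.prod_nil, chi, sum_range_one]
    norm_num [one_def]
  · simp [chL, Nat.digits_of_lt p ν hν h]

lemma frobTwist_chi_one (p : ℕ) : frobTwist p (chi 1) = single (p : ℤ) 1 + single (-p : ℤ) 1 := by
  rw [chi, sum_range_succ, sum_range_one, frobTwist, coeff_add, coeff_single, coeff_single,
    Finsupp.mapDomain_add, Finsupp.mapDomain_single, Finsupp.mapDomain_single, ofCoeff_add,
    ofCoeff_single, ofCoeff_single]
  norm_num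

/-- The linkage principle for `SL₂`: for `p ≤ ν ≤ 2p - 2` the Weyl module `Δ(ν)` has exactly the
composition factors `L(ν)` and `L(2p - 2 - ν)`. -/
lemma chi_eq_chL_add_chi {p ν : ℕ} (hp : 1 < p) (h1 : p ≤ ν) (h2 : ν ≤ 2 * p - 2) :
    chi ν = chL p ν + chi (2 * p - 2 - ν) := by
  have hdigits : Nat.digits p ν = [ν - p, 1] := by
    rw [show ν = ν - p + p * 1 by omega, Nat.digits_add p hp _ _ (by omega) (by omega),
      Nat.digits_of_lt p 1 one_ne_zero hp]
    congr
    omega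
  have hchL : chL p ν = chi (ν - p) * frobTwist p (chi 1) := by simp [chL, hdigits]
  apply mul_left_cancel₀ weylDenom_ne_zero
  rw [hchL, frobTwist_chi_one, mul_add, ← mul_assoc]
  simp only [weylDenom_mul_chi, sub_mul, mul_add, single_mul_single, one_mul]
  push_cast [h1, h2, show 2 ≤ 2 * p by omega]
  ring_nf

lemma chi_mem_span_chL {p ν : ℕ} (hp : 1 < p) (h : ν ≤ 2 * p - 2) :
    chi ν ∈ Submodule.span ℕ (Set.range (chL p)) := by
  rcases lt_or_ge ν p with hν | hν
  · exact chL_of_lt hν ▸ Submodule.subset_span ⟨ν, rfl⟩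
  · rw [chi_eq_chL_add_chi hp hν h, ← chL_of_lt (by omega : 2 * p - 2 - ν < p)]
    exact add_mem (Submodule.subset_span ⟨ν, rfl⟩) (Submodule.subset_span ⟨_, rfl⟩)

lemma chL_mul_chL_of_add_lt {p a b : ℕ} (h : a + b < p) :
    chL p a * chL p b = ∑ ν ∈ cgWeights a b, chL p ν := by
  rw [chL_of_lt (by omega : a < p), chL_of_lt (by omega : b < p), chi_mul_chi]
  refine sum_congr rfl fun ν hν => (chL_of_lt ?_).symm
  obtain ⟨j, -, rfl⟩ := mem_cgWeights.mp hν
  omega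

lemma chL_mul_chL_eq_two_nsmul_add {p a b : ℕ} (hp : 1 < p) (ha : a < p) (hb : b < p)
    (h : p ≤ a + b) : ∃ y ∈ Submodule.span ℕ (Set.range (chL p)),
      chL p a * chL p b = 2 • chL p (2 * p - 2 - (a + b)) + y := by
  have htop : a + b ∈ cgWeights a b := mem_cgWeights.mpr ⟨0, by omega, by omega⟩
  have hlow : 2 * p - 2 - (a + b) ∈ (cgWeights a b).erase (a + b) :=
    mem_erase.mpr ⟨by omega, mem_cgWeights.mpr ⟨a + b - p + 1, by omega, by omega⟩⟩
  refine ⟨chL p (a + b) + ∑ ν ∈ ((cgWeights a b).erase (a + b)).erase (2 * p - 2 - (a + b)), chi ν,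
    add_mem (Submodule.subset_span ⟨_, rfl⟩) (Submodule.sum_mem _ fun ν hν => ?_), ?_⟩
  · obtain ⟨j, -, rfl⟩ := mem_cgWeights.mp (mem_of_mem_erase (mem_of_mem_erase hν))
    exact chi_mem_span_chL hp (by omega)
  · rw [chL_of_lt ha, chL_of_lt hb, chi_mul_chi, ← add_sum_erase _ _ htop,
      ← add_sum_erase _ _ hlow, chi_eq_chL_add_chi hp h (by omega),
      ← chL_of_lt (by omega : 2 * p - 2 - (a + b) < p)]
    abel

/-- For `SL₂` over an algebraically closed field of characteristic `p`, with
`p`-restricted dominant weights `λ, μ` (identifying weights with ℕ, so `λ, μ < p`),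
the tensor product `L(λ) ⊗ L(μ)` is multiplicity-free (equivalently: its character
is a sum of characters of pairwise distinct irreducibles) if and only if
`λ + μ ≤ p - 1`. -/
theorem SL2_multiplicityFree_iff (p : ℕ) (hp : p.Prime)
    (lam mu : ℕ) (hl : lam < p) (hm : mu < p) :
    (∃ S : Finset ℕ, chL p lam * chL p mu = ∑ ν ∈ S, chL p ν) ↔ lam + mu ≤ p - 1 := by
  constructor
  · rintro ⟨S, hS⟩
    by_contra! h
    obtain ⟨y, hy, hprod⟩ := chL_mul_chL_eq_two_nsmul_add hp.one_lt hl hm (by omega)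
    exact ((linearIndependent_chL hp.ne_zero).restrict_scalars' ℕ).sum_ne_two_nsmul_add S _ hy
      (hS ▸ hprod)
  · intro h
    exact ⟨_, chL_mul_chL_of_add_lt (by omega)⟩
end

section
/- Weyl character product decomposition for A2: for dominant weights λ = (a,0) and μ = (c,d) of SL₃, χ(λ)·χ(μ) = Σ_{i=0}^{a} Σ_{j=max{0,i-c}}^{min{i,d}} χ(λ + μ − iα₁ − jα₂), and all weights appearing in the sum are dominant. -/
/-- `e x` is the basis element `e^x` of the group ring `ℤ[X]` for the A2 weight
lattice `X = ℤ × ℤ` (coordinates in the fundamental weights `ω₁, ω₂`). -/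
noncomputable def eA2 (x : ℤ × ℤ) : AddMonoidAlgebra ℤ (ℤ × ℤ) :=
  AddMonoidAlgebra.single x 1

/-- The Weyl numerator `A(λ) = Σ_{w ∈ W} det(w) e^{w(λ+ρ)}` for A2, `ρ = (1,1)`. -/
noncomputable def A2num (l : ℤ × ℤ) : AddMonoidAlgebra ℤ (ℤ × ℤ) :=
  let x := l.1 + 1
  let y := l.2 + 1
  eA2 (x, y) - eA2 (-x, x + y) - eA2 (x + y, -y)
    + eA2 (-(x + y), x) + eA2 (y, -(x + y)) - eA2 (-y, -x)

/-- `χ` satisfies Weyl's character formula for A2: `A(0) * χ(λ) = A(λ)`. -/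
def IsWeylCharA2 (χ : ℤ × ℤ → AddMonoidAlgebra ℤ (ℤ × ℤ)) : Prop :=
  ∀ l : ℤ × ℤ, A2num (0, 0) * χ l = A2num l

/-!
The weights of `Δ(a,0)` are the `λ - iα₁ - jα₂` with `j ≤ i ≤ a`; let `X` be the sum of their
exponentials. This multiset of weights is permuted by `s₁` and `s₂`, hence
`X · A(μ) = Σ_ν A(μ + ν)` over the weights `ν` (Brauer–Klimyk). For `μ = (c, d)` the terms with
`j > d` cancel in pairs under the dot action of `s₂`, those with `j ≤ d` and `j < i - c` under the
dot action of `s₁`, and the fixed points of these involutions lie on walls, where `A` vanishes.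
For `μ = 0` only `A(λ)` survives, so `X = χ(λ)` by Weyl's formula; cancelling `A(0)` in the domain
`ℤ[X]` then gives the product formula.
-/

lemma eA2_add (x y : ℤ × ℤ) : eA2 (x + y) = eA2 x * eA2 y := by
  simp [eA2, AddMonoidAlgebra.single_mul_single]

def reflect₁ : ℤ × ℤ →+ ℤ × ℤ :=
  AddMonoidHom.mk' (fun v => (-v.1, v.1 + v.2)) fun _ _ =>
    Prod.ext (neg_add _ _) (add_add_add_comm _ _ _ _)

def reflect₂ : ℤ × ℤ →+ ℤ × ℤ :=
  AddMonoidHom.mk' (fun v => (v.1 + v.2, -v.2)) fun _ _ =>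
    Prod.ext (add_add_add_comm _ _ _ _) (neg_add _ _)

@[simp] lemma reflect₁_apply (v : ℤ × ℤ) : reflect₁ v = (-v.1, v.1 + v.2) := rfl

@[simp] lemma reflect₂_apply (v : ℤ × ℤ) : reflect₂ v = (v.1 + v.2, -v.2) := rfl

def weylDet : Fin 6 → ℤ := ![1, -1, -1, 1, 1, -1]

def weylGroupA2 : Fin 6 → ℤ × ℤ →+ ℤ × ℤ :=
  ![.id _, reflect₁, reflect₂, reflect₁.comp reflect₂, reflect₂.comp reflect₁,
    reflect₁.comp (reflect₂.comp reflect₁)]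

noncomputable def alternant (v : ℤ × ℤ) : AddMonoidAlgebra ℤ (ℤ × ℤ) :=
  ∑ k, weylDet k • eA2 (weylGroupA2 k v)

lemma A2num_eq_alternant (l : ℤ × ℤ) : A2num l = alternant (l + (1, 1)) := by
  obtain ⟨x, y⟩ := l
  simp only [A2num, alternant, Fin.sum_univ_six, weylDet, weylGroupA2, Matrix.cons_val,
    AddMonoidHom.id_apply, AddMonoidHom.comp_apply, reflect₁_apply, reflect₂_apply, Prod.mk_add_mk]
  ring_nf

-- `(-x - 2, x + y + 1) = s₁ · (x, y)` and `(x + y + 1, -y - 2) = s₂ · (x, y)` for the dot action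
-- `w · ν = w (ν + ρ) - ρ`.
lemma A2num_dot_reflect₁ (v : ℤ × ℤ) : A2num (-v.1 - 2, v.1 + v.2 + 1) = -A2num v := by
  simp only [A2num]; ring_nf

lemma A2num_dot_reflect₂ (v : ℤ × ℤ) : A2num (v.1 + v.2 + 1, -v.2 - 2) = -A2num v := by
  simp only [A2num]; ring_nf

lemma A2num_eq_zero_of_fst_eq_neg_one {v : ℤ × ℤ} (h : v.1 = -1) : A2num v = 0 := by
  simp only [A2num, h]; ring_nf

lemma A2num_eq_zero_of_snd_eq_neg_one {v : ℤ × ℤ} (h : v.2 = -1) : A2num v = 0 := by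
  simp only [A2num, h]; ring_nf

lemma A2num_zero_ne_zero : A2num (0, 0) ≠ 0 := by
  intro h
  have hcoeff := congrArg (fun f : AddMonoidAlgebra ℤ (ℤ × ℤ) => f.coeff (1, 1)) h
  simp [A2num, eA2, AddMonoidAlgebra.coeff_single] at hcoeff

def symPowIndex (a : ℕ) : Finset (ℕ × ℕ) :=
  (Finset.range (a + 1) ×ˢ Finset.range (a + 1)).filter fun p => p.2 ≤ p.1

lemma mem_symPowIndex {a : ℕ} {p : ℕ × ℕ} : p ∈ symPowIndex a ↔ p.2 ≤ p.1 ∧ p.1 ≤ a := by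
  simp only [symPowIndex, Finset.mem_filter, Finset.mem_product, Finset.mem_range]
  omega

-- `λ - iα₁ - jα₂` for `λ = (a, 0)` and `p = (i, j)`.
def symPowWeight (a : ℕ) (p : ℕ × ℕ) : ℤ × ℤ :=
  ((a : ℤ) - 2 * p.1 + p.2, (p.1 : ℤ) - 2 * p.2)

noncomputable def symPowChar (a : ℕ) : AddMonoidAlgebra ℤ (ℤ × ℤ) :=
  ∑ p ∈ symPowIndex a, eA2 (symPowWeight a p)

section WeylInvariance

variable {M : Type*} [AddCommMonoid M] {a : ℕ}

lemma sum_comp_symPowWeight_of_involution (w : ℤ × ℤ → ℤ × ℤ) (σ : ℕ × ℕ → ℕ × ℕ)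
    (hσ : ∀ p ∈ symPowIndex a, σ p ∈ symPowIndex a)
    (hσσ : ∀ p ∈ symPowIndex a, σ (σ p) = p)
    (hw : ∀ p ∈ symPowIndex a, w (symPowWeight a p) = symPowWeight a (σ p)) (f : ℤ × ℤ → M) :
    ∑ p ∈ symPowIndex a, f (w (symPowWeight a p)) = ∑ p ∈ symPowIndex a, f (symPowWeight a p) :=
  Finset.sum_nbij' σ σ hσ hσ hσσ hσσ fun p hp => by rw [hw p hp]

lemma sum_comp_reflect₁_symPowWeight (f : ℤ × ℤ → M) :
    ∑ p ∈ symPowIndex a, f (reflect₁ (symPowWeight a p)) =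
      ∑ p ∈ symPowIndex a, f (symPowWeight a p) := by
  refine sum_comp_symPowWeight_of_involution _ (fun p => (a - p.1 + p.2, p.2)) ?_ ?_ ?_ f <;>
  · rintro ⟨i, j⟩ hp
    simp only [mem_symPowIndex, symPowWeight, reflect₁_apply, Prod.ext_iff, and_true] at hp ⊢
    omega

lemma sum_comp_reflect₂_symPowWeight (f : ℤ × ℤ → M) :
    ∑ p ∈ symPowIndex a, f (reflect₂ (symPowWeight a p)) =
      ∑ p ∈ symPowIndex a, f (symPowWeight a p) := by
  refine sum_comp_symPowWeight_of_involution _ (fun p => (p.1, p.1 - p.2)) ?_ ?_ ?_ f <;>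
  · rintro ⟨i, j⟩ hp
    simp only [mem_symPowIndex, symPowWeight, reflect₂_apply, Prod.ext_iff, true_and] at hp ⊢
    omega

lemma sum_eA2_map_symPowWeight_add (w : ℤ × ℤ →+ ℤ × ℤ)
    (hw : ∀ f : ℤ × ℤ → AddMonoidAlgebra ℤ (ℤ × ℤ),
      ∑ p ∈ symPowIndex a, f (w (symPowWeight a p)) = ∑ p ∈ symPowIndex a, f (symPowWeight a p))
    (v : ℤ × ℤ) :
    ∑ p ∈ symPowIndex a, eA2 (w (symPowWeight a p + v)) = symPowChar a * eA2 (w v) := by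
  simp only [map_add, eA2_add, ← Finset.sum_mul, hw eA2, symPowChar]

lemma sum_comp_weylGroupA2_symPowWeight (k : Fin 6) (f : ℤ × ℤ → M) :
    ∑ p ∈ symPowIndex a, f (weylGroupA2 k (symPowWeight a p)) =
      ∑ p ∈ symPowIndex a, f (symPowWeight a p) := by
  have h₁ := sum_comp_reflect₁_symPowWeight (M := M) (a := a)
  have h₂ := sum_comp_reflect₂_symPowWeight (M := M) (a := a)
  fin_cases k
  · rfl
  · exact h₁ f
  · exact h₂ f
  · exact (h₂ (f ∘ reflect₁)).trans (h₁ f)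
  · exact (h₁ (f ∘ reflect₂)).trans (h₂ f)
  · exact ((h₁ (f ∘ reflect₁ ∘ reflect₂)).trans (h₂ (f ∘ reflect₁))).trans (h₁ f)

end WeylInvariance

lemma symPowChar_mul_alternant (a : ℕ) (v : ℤ × ℤ) :
    symPowChar a * alternant v = ∑ p ∈ symPowIndex a, alternant (symPowWeight a p + v) :=
  calc symPowChar a * alternant v
      = ∑ k, weylDet k • (symPowChar a * eA2 (weylGroupA2 k v)) := by
        simp only [alternant, Finset.mul_sum, mul_smul_comm]
    _ = ∑ k, weylDet k • ∑ p ∈ symPowIndex a, eA2 (weylGroupA2 k (symPowWeight a p + v)) := by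
        simp only [sum_eA2_map_symPowWeight_add _ (sum_comp_weylGroupA2_symPowWeight _)]
    _ = ∑ p ∈ symPowIndex a, alternant (symPowWeight a p + v) := by
        simp only [Finset.smul_sum, alternant]
        exact Finset.sum_comm

lemma symPowChar_mul_A2num (a : ℕ) (l : ℤ × ℤ) :
    symPowChar a * A2num l = ∑ p ∈ symPowIndex a, A2num (l + symPowWeight a p) := by
  simp only [A2num_eq_alternant, symPowChar_mul_alternant, add_left_comm, add_assoc]

section Cancellation

variable (a c d : ℕ)

lemma sum_A2num_filter_snd_gt_eq_zero :
    ∑ p ∈ (symPowIndex a).filter (fun p => d < p.2),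
      A2num (((c : ℤ), (d : ℤ)) + symPowWeight a p) = 0 := by
  refine Finset.sum_involution (fun p _ => (p.1, d + 1 + p.1 - p.2)) ?_ ?_ ?_ ?_
  · rintro ⟨i, j⟩ hp
    simp only [Finset.mem_filter, mem_symPowIndex] at hp
    rw [← neg_eq_iff_add_eq_zero, ← A2num_dot_reflect₂]
    congr 1
    simp only [symPowWeight, Prod.mk_add_mk, Prod.ext_iff]
    omega
  · rintro ⟨i, j⟩ hp hne hfix
    simp only [Finset.mem_filter, mem_symPowIndex, Prod.ext_iff, true_and] at hp hfix
    refine hne (A2num_eq_zero_of_snd_eq_neg_one ?_)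
    simp only [symPowWeight, Prod.snd_add]
    omega
  all_goals
    rintro ⟨i, j⟩ hp
    simp only [Finset.mem_filter, mem_symPowIndex, Prod.ext_iff, true_and] at hp ⊢
    omega

lemma sum_A2num_filter_fst_gt_eq_zero :
    ∑ p ∈ ((symPowIndex a).filter (fun p => ¬d < p.2)).filter (fun p => p.2 + c < p.1),
      A2num (((c : ℤ), (d : ℤ)) + symPowWeight a p) = 0 := by
  refine Finset.sum_involution (fun p _ => (a + c + 1 + p.2 - p.1, p.2)) ?_ ?_ ?_ ?_
  · rintro ⟨i, j⟩ hp
    simp only [Finset.mem_filter, mem_symPowIndex] at hp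
    rw [← neg_eq_iff_add_eq_zero, ← A2num_dot_reflect₁]
    congr 1
    simp only [symPowWeight, Prod.mk_add_mk, Prod.ext_iff]
    omega
  · rintro ⟨i, j⟩ hp hne hfix
    simp only [Finset.mem_filter, mem_symPowIndex, Prod.ext_iff, and_true] at hp hfix
    refine hne (A2num_eq_zero_of_fst_eq_neg_one ?_)
    simp only [symPowWeight, Prod.fst_add]
    omega
  all_goals
    rintro ⟨i, j⟩ hp
    simp only [Finset.mem_filter, mem_symPowIndex, Prod.ext_iff, and_true] at hp ⊢
    omega

lemma sum_filter_symPowIndex_eq_sum_Icc {M : Type*} [AddCommMonoid M] (f : ℕ × ℕ → M) :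
    ∑ p ∈ ((symPowIndex a).filter (fun p => ¬d < p.2)).filter (fun p => ¬p.2 + c < p.1), f p =
      ∑ i ∈ Finset.range (a + 1), ∑ j ∈ Finset.Icc (i - c) (min i d), f (i, j) := by
  rw [symPowIndex, Finset.filter_filter, Finset.filter_filter, Finset.sum_filter,
    Finset.sum_product]
  refine Finset.sum_congr rfl fun i hi => ?_
  rw [← Finset.sum_filter]
  refine Finset.sum_congr ?_ fun j _ => rfl
  ext j
  simp only [Finset.mem_range] at hi
  simp only [Finset.mem_filter, Finset.mem_range, Finset.mem_Icc, le_min_iff]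
  omega

end Cancellation

lemma symPowChar_mul_A2num_natCast (a c d : ℕ) :
    symPowChar a * A2num ((c : ℤ), (d : ℤ)) =
      ∑ i ∈ Finset.range (a + 1), ∑ j ∈ Finset.Icc (i - c) (min i d),
        A2num ((a : ℤ) + (c : ℤ) - 2 * i + j, (d : ℤ) + i - 2 * j) := by
  rw [symPowChar_mul_A2num, ← Finset.sum_filter_not_add_sum_filter _ (fun p => d < p.2),
    sum_A2num_filter_snd_gt_eq_zero, add_zero,
    ← Finset.sum_filter_not_add_sum_filter _ (fun p => p.2 + c < p.1),
    sum_A2num_filter_fst_gt_eq_zero, add_zero, sum_filter_symPowIndex_eq_sum_Icc]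
  refine Finset.sum_congr rfl fun i _ => Finset.sum_congr rfl fun j _ => ?_
  simp only [symPowWeight, Prod.mk_add_mk]
  ring_nf

lemma symPowChar_mul_A2num_zero (a : ℕ) : symPowChar a * A2num (0, 0) = A2num ((a : ℤ), 0) := by
  have h := symPowChar_mul_A2num_natCast a 0 0
  simp only [Nat.cast_zero] at h
  rw [h, Finset.sum_eq_single_of_mem 0 (by simp)]
  · norm_num
  · intro i _ hi
    rw [Finset.Icc_eq_empty (by omega), Finset.sum_empty]

lemma IsWeylCharA2.apply_natCast_zero_eq_symPowChar {χ : ℤ × ℤ → AddMonoidAlgebra ℤ (ℤ × ℤ)}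
    (hχ : IsWeylCharA2 χ) (a : ℕ) : χ ((a : ℤ), 0) = symPowChar a :=
  mul_left_cancel₀ A2num_zero_ne_zero <| by
    rw [hχ, mul_comm, symPowChar_mul_A2num_zero]

/-- Weyl character product decomposition for A2: for dominant weights `λ = (a,0)`
and `μ = (c,d)` of SL₃ (with `α₁ = (2,-1)`, `α₂ = (-1,2)` in fundamental-weight
coordinates), `χ(λ)·χ(μ) = Σ_{i=0}^{a} Σ_{j=max{0,i-c}}^{min{i,d}} χ(λ + μ − iα₁ − jα₂)`,
and all weights appearing in the sum are dominant. -/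
theorem A2_product_a0_cd (χ : ℤ × ℤ → AddMonoidAlgebra ℤ (ℤ × ℤ))
    (hχ : IsWeylCharA2 χ) (a c d : ℕ) :
    (χ ((a : ℤ), 0) * χ ((c : ℤ), (d : ℤ)) =
        ∑ i ∈ Finset.range (a + 1), ∑ j ∈ Finset.Icc (i - c) (min i d),
          χ ((a : ℤ) + (c : ℤ) - 2 * i + j, (d : ℤ) + i - 2 * j)) ∧
    (∀ i ∈ Finset.range (a + 1), ∀ j ∈ Finset.Icc (i - c) (min i d),
        0 ≤ (a : ℤ) + (c : ℤ) - 2 * i + j ∧ 0 ≤ (d : ℤ) + i - 2 * j) := by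
  refine ⟨mul_left_cancel₀ A2num_zero_ne_zero ?_, fun i hi j hj => ?_⟩
  · rw [hχ.apply_natCast_zero_eq_symPowChar, mul_left_comm, hχ, symPowChar_mul_A2num_natCast]
    simp only [Finset.mul_sum, hχ _]
  · simp only [Finset.mem_range, Finset.mem_Icc, le_min_iff] at hi hj
    omega
end
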